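/- Let L be a Moufang loop, T ≤ L a subgroup generated by a set S, and u ∈ L with ((g₁g₂)u)² = 1 for all g₁,g₂ ∈ S ∪ {e}. Then uwu = w⁻¹ for every element w of T. -/

import Mathlib

/-- A Moufang loop: a loop (a quasigroup with two-sided identity) satisfying the
Moufang identities (m1) `z(x(yx)) = ((zx)y)x`, (m2) `x(y(xz)) = ((xy)x)z`,
(m3) `(xy)(zx) = x((yz)x)`. -/
class MoufangLoop (L : Type*) extends Mul L, One L where
  one_mul : ∀ a : L, 1 * a = a
  mul_one : ∀ a : L, a * 1 = a
  left_bij : ∀ a : L, Function.Bijective fun x : L => a * x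
  right_bij : ∀ a : L, Function.Bijective fun x : L => x * a
  m1 : ∀ x y z : L, z * (x * (y * x)) = ((z * x) * y) * x
  m2 : ∀ x y z : L, x * (y * (x * z)) = ((x * y) * x) * z
  m3 : ∀ x y z : L, (x * y) * (z * x) = x * ((y * z) * x)

/-- The subset `T` of the Moufang loop `L`, together with the inversion map `inv`,
forms a subgroup of `L`: it contains the identity, is closed under multiplication
and inversion, multiplication restricted to `T` is associative, and `inv` provides
two-sided inverses in `T`. -/
structure IsSubgroupOfLoop {L : Type*} [MoufangLoop L] (T : Set L) (inv : L → L) : Prop where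
  one_mem : (1 : L) ∈ T
  mul_mem : ∀ a ∈ T, ∀ b ∈ T, a * b ∈ T
  inv_mem : ∀ a ∈ T, inv a ∈ T
  assoc : ∀ a ∈ T, ∀ b ∈ T, ∀ c ∈ T, (a * b) * c = a * (b * c)
  mul_inv : ∀ a ∈ T, a * inv a = 1
  inv_mul : ∀ a ∈ T, inv a * a = 1

/-- `T` is generated (as a group) by the subset `S`: every element of `T` is an
iterated product of elements of `S` and their inverses. -/
def GeneratedBy {L : Type*} [MoufangLoop L] (T : Set L) (inv : L → L) (S : Set L) : Prop :=
  S ⊆ T ∧ ∀ w ∈ T, ∃ l : List L,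
    (∀ x ∈ l, x ∈ S ∨ ∃ s ∈ S, x = inv s) ∧ w = l.foldr (· * ·) 1

/-!
Say that `u` inverts `a` when `u a u = a⁻¹`. Taking `g₁ = g₂ = e` gives `u² = e`, and then for
`a ∈ T` the condition `(a u)² = e` says exactly that `u` inverts `a`; so `u` inverts every
product `g₁ g₂` of two elements of `S ∪ {e}`. If `u` inverts `a` and `b`, the Moufang identities
show that it inverts `a b` iff `a⁻¹ (u b) = (u b) a`, a condition that is unchanged under
`a ↦ a⁻¹`; so `u` inverts all products of two letters from `S ∪ S⁻¹ ∪ {e}`. Finally, when `u`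
inverts `z` the element `u z` is again an involution, and applying the same identities to it
shows that `u` inverts `x (y z)` as soon as it inverts `x, y, z, x y, y z, x⁻¹ z`. Induction on
the length of a word in the generators then covers all of `T`.
-/

section

variable {L : Type*} [MoufangLoop L]

namespace MoufangLoop

protected theorem mul_left_cancel {a x y : L} (h : a * x = a * y) : x = y :=
  (left_bij a).1 h

protected theorem mul_right_cancel {a x y : L} (h : x * a = y * a) : x = y :=
  (right_bij a).1 h

theorem left_alternative (a b : L) : a * (a * b) = (a * a) * b := by
  simpa only [MoufangLoop.one_mul, MoufangLoop.mul_one] using m2 a 1 b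

theorem right_alternative (a b : L) : (b * a) * a = b * (a * a) := by
  simpa only [MoufangLoop.one_mul, MoufangLoop.mul_one] using (m1 a 1 b).symm

theorem flexible (a b : L) : (a * b) * a = a * (b * a) := by
  simpa only [MoufangLoop.one_mul, MoufangLoop.mul_one] using m3 a b 1

section Involution

variable {t : L}

theorem mul_mul_cancel_left_of_mul_self (ht : t * t = 1) (a : L) : t * (t * a) = a := by
  rw [left_alternative, ht, MoufangLoop.one_mul]

theorem mul_mul_cancel_right_of_mul_self (ht : t * t = 1) (a : L) : (a * t) * t = a := by
  rw [right_alternative, ht, MoufangLoop.mul_one]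

theorem mul_left_eq_conj_mul_of_mul_self (ht : t * t = 1) (a b : L) :
    t * (a * b) = ((t * a) * t) * (t * b) := by
  simpa only [mul_mul_cancel_left_of_mul_self ht b] using m2 t a (t * b)

theorem mul_right_eq_mul_conj_of_mul_self (ht : t * t = 1) (a b : L) :
    (a * b) * t = (a * t) * (t * (b * t)) := by
  simpa only [mul_mul_cancel_right_of_mul_self ht] using (m1 t b (a * t)).symm

theorem mul_eq_mul_conj_of_mul_self (ht : t * t = 1) (a : L) : a * t = t * ((t * a) * t) := by
  rw [flexible, mul_mul_cancel_left_of_mul_self ht]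

theorem mul_mul_eq_mul_conj_mul_of_mul_self (ht : t * t = 1) (a c : L) :
    (a * t) * c = (a * ((t * c) * t)) * t := by
  simpa only [mul_mul_cancel_right_of_mul_self ht, mul_mul_cancel_left_of_mul_self ht] using
    (mul_right_eq_mul_conj_of_mul_self ht a ((t * c) * t)).symm

end Involution

end MoufangLoop

namespace IsSubgroupOfLoop

variable {T : Set L} {inv : L → L}

theorem foldr_mem (hT : IsSubgroupOfLoop T inv) {l : List L} (hl : ∀ x ∈ l, x ∈ T) :
    l.foldr (· * ·) 1 ∈ T := by
  induction l with
  | nil => exact hT.one_mem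
  | cons a l ih =>
    exact hT.mul_mem a (hl a List.mem_cons_self) _
      (ih fun x hx => hl x (List.mem_cons_of_mem a hx))

theorem mul_inv_cancel_left (hT : IsSubgroupOfLoop T inv) {a : L} (ha : a ∈ T) (b : L) :
    a * (inv a * b) = b := by
  refine MoufangLoop.mul_left_cancel (a := inv a) ?_
  simpa only [hT.inv_mul a ha, MoufangLoop.one_mul] using MoufangLoop.m2 (inv a) a b

theorem mul_inv_cancel_right (hT : IsSubgroupOfLoop T inv) {a : L} (ha : a ∈ T) (b : L) :
    (b * a) * inv a = b := by
  refine MoufangLoop.mul_right_cancel (a := a) ?_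
  simpa only [hT.inv_mul a ha, MoufangLoop.mul_one] using (MoufangLoop.m1 a (inv a) b).symm

theorem inv_inv (hT : IsSubgroupOfLoop T inv) {a : L} (ha : a ∈ T) : inv (inv a) = a :=
  MoufangLoop.mul_left_cancel <| by
    rw [hT.mul_inv (inv a) (hT.inv_mem a ha), hT.inv_mul a ha]

theorem inv_mul_rev (hT : IsSubgroupOfLoop T inv) {a b : L} (ha : a ∈ T) (hb : b ∈ T) :
    inv (a * b) = inv b * inv a := by
  refine MoufangLoop.mul_left_cancel (a := a * b) ?_
  rw [hT.mul_inv _ (hT.mul_mem a ha b hb),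
    hT.assoc a ha b hb _ (hT.mul_mem _ (hT.inv_mem b hb) _ (hT.inv_mem a ha)),
    hT.mul_inv_cancel_left hb, hT.mul_inv a ha]

theorem eq_inv_of_mul_eq_one (hT : IsSubgroupOfLoop T inv) {a b : L} (ha : a ∈ T)
    (h : b * a = 1) : b = inv a :=
  MoufangLoop.mul_right_cancel (h.trans (hT.inv_mul a ha).symm)

theorem mul_eq_mul_inv_of_inv_mul_eq (hT : IsSubgroupOfLoop T inv) {a w : L} (ha : a ∈ T)
    (h : inv a * w = w * a) : a * w = w * inv a := by
  have hconj : (a * w) * a = w := by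
    rw [MoufangLoop.flexible, ← h, hT.mul_inv_cancel_left ha]
  rw [← hconj, hT.mul_inv_cancel_right ha, hconj]

end IsSubgroupOfLoop

def Inverts (inv : L → L) (u a : L) : Prop :=
  (u * a) * u = inv a

namespace Inverts

open MoufangLoop

variable {T : Set L} {inv : L → L} {u a b : L}

theorem mul_eq_inv_mul (hu : u * u = 1) (h : Inverts inv u a) : u * a = inv a * u := by
  rw [← h, mul_mul_cancel_right_of_mul_self hu]

theorem to_inv (hT : IsSubgroupOfLoop T inv) (hu : u * u = 1) (ha : a ∈ T)
    (h : Inverts inv u a) : Inverts inv u (inv a) := by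
  rw [Inverts, hT.inv_inv ha, ← h, ← mul_eq_mul_conj_of_mul_self hu,
    mul_mul_cancel_right_of_mul_self hu]

theorem of_mul_self (hT : IsSubgroupOfLoop T inv) (hu : u * u = 1) (ha : a ∈ T)
    (h : (a * u) * (a * u) = 1) : Inverts inv u a := by
  apply hT.eq_inv_of_mul_eq_one ha
  apply MoufangLoop.mul_right_cancel (a := u)
  apply MoufangLoop.mul_left_cancel (a := u)
  rw [MoufangLoop.one_mul, hu, ← m3, ← mul_eq_mul_conj_of_mul_self hu, h]

theorem mul_self (hT : IsSubgroupOfLoop T inv) (hu : u * u = 1) (ha : a ∈ T)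
    (h : Inverts inv u a) : (u * a) * (u * a) = 1 := by
  nth_rewrite 2 [h.mul_eq_inv_mul hu]
  rw [m3, hT.mul_inv a ha, MoufangLoop.one_mul, hu]

theorem mul_iff (hT : IsSubgroupOfLoop T inv) (hu : u * u = 1) (ha : a ∈ T) (hb : b ∈ T)
    (qa : Inverts inv u a) (qb : Inverts inv u b) :
    Inverts inv u (a * b) ↔ inv a * (u * b) = (u * b) * a := by
  have hleft : u * (a * b) = inv a * (u * b) := by
    rw [mul_left_eq_conj_mul_of_mul_self hu, qa]
  constructor
  · intro qab
    calc inv a * (u * b) = inv (a * b) * u := by rw [← hleft, qab.mul_eq_inv_mul hu]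
      _ = (inv b * u) * ((u * inv a) * u) := by
        rw [hT.inv_mul_rev ha hb, mul_right_eq_mul_conj_of_mul_self hu, flexible]
      _ = (u * b) * a := by rw [qa.to_inv hT hu ha, hT.inv_inv ha, qb.mul_eq_inv_mul hu]
  · intro hcrit
    calc (u * (a * b)) * u = ((inv b * u) * a) * u := by rw [hleft, hcrit, qb.mul_eq_inv_mul hu]
      _ = inv (a * b) := by
        rw [mul_mul_eq_mul_conj_mul_of_mul_self hu, qa, mul_mul_cancel_right_of_mul_self hu,
          hT.inv_mul_rev ha hb]

theorem inv_mul (hT : IsSubgroupOfLoop T inv) (hu : u * u = 1) (ha : a ∈ T) (hb : b ∈ T)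
    (qa : Inverts inv u a) (qb : Inverts inv u b) (qab : Inverts inv u (a * b)) :
    Inverts inv u (inv a * b) := by
  rw [mul_iff hT hu (hT.inv_mem a ha) hb (qa.to_inv hT hu ha) qb, hT.inv_inv ha]
  exact hT.mul_eq_mul_inv_of_inv_mul_eq ha ((mul_iff hT hu ha hb qa qb).1 qab)

theorem mul_inv (hT : IsSubgroupOfLoop T inv) (hu : u * u = 1) (ha : a ∈ T) (hb : b ∈ T)
    (qa : Inverts inv u a) (qb : Inverts inv u b) (qab : Inverts inv u (a * b)) :
    Inverts inv u (a * inv b) := by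
  have hb' := hT.inv_mem b hb
  have ha' := hT.inv_mem a ha
  have qba : Inverts inv u (inv b * inv a) := by
    simpa only [hT.inv_mul_rev ha hb] using qab.to_inv hT hu (hT.mul_mem a ha b hb)
  have qba' : Inverts inv u (b * inv a) := by
    simpa only [hT.inv_inv hb] using
      inv_mul hT hu hb' ha' (qb.to_inv hT hu hb) (qa.to_inv hT hu ha) qba
  simpa only [hT.inv_mul_rev hb ha', hT.inv_inv ha] using qba'.to_inv hT hu (hT.mul_mem b hb _ ha')

theorem mul_mul {x y z : L} (hT : IsSubgroupOfLoop T inv) (hu : u * u = 1)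
    (hx : x ∈ T) (hy : y ∈ T) (hz : z ∈ T)
    (qx : Inverts inv u x) (qy : Inverts inv u y) (qz : Inverts inv u z)
    (qxy : Inverts inv u (x * y)) (qyz : Inverts inv u (y * z))
    (qxz : Inverts inv u (inv x * z)) :
    Inverts inv u (x * (y * z)) := by
  have ht : (u * z) * (u * z) = 1 := qz.mul_self hT hu hz
  have hy_comm : inv y * (u * z) = (u * z) * y := (mul_iff hT hu hy hz qy qz).1 qyz
  have hx_comm : inv x * (u * z) = (u * z) * x := by
    have h := (mul_iff hT hu (hT.inv_mem x hx) hz (qx.to_inv hT hu hx) qz).1 qxz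
    simpa only [hT.inv_inv hx] using hT.mul_eq_mul_inv_of_inv_mul_eq (hT.inv_mem x hx) h
  have hx_conj : ((u * z) * x) * (u * z) = inv x := by
    rw [← hx_comm, mul_mul_cancel_right_of_mul_self ht]
  have hxyz : u * (x * (y * z)) = (u * z) * (x * y) := by
    rw [mul_left_eq_conj_mul_of_mul_self hu x, qx, mul_left_eq_conj_mul_of_mul_self hu y, qy,
      hy_comm, ← hx_conj, ← mul_left_eq_conj_mul_of_mul_self ht]
  calc (u * (x * (y * z))) * u = ((inv z * inv (x * y)) * u) * u := by
        rw [hxyz, qz.mul_eq_inv_mul hu, mul_mul_eq_mul_conj_mul_of_mul_self hu, qxy]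
    _ = inv (x * (y * z)) := by
        rw [mul_mul_cancel_right_of_mul_self hu, hT.inv_mul_rev hx (hT.mul_mem y hy z hz),
          hT.inv_mul_rev hx hy, hT.inv_mul_rev hy hz,
          hT.assoc _ (hT.inv_mem z hz) _ (hT.inv_mem y hy) _ (hT.inv_mem x hx)]

end Inverts

section Words

variable {T : Set L} {inv : L → L} {u : L}

theorem inverts_mul_of_mem_union_image (hT : IsSubgroupOfLoop T inv) (hu : u * u = 1)
    {B : Set L} (hBT : B ⊆ T) (h1 : 1 ∈ B) (hB : ∀ a ∈ B, ∀ b ∈ B, Inverts inv u (a * b)) :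
    ∀ a ∈ B ∪ inv '' B, ∀ b ∈ B ∪ inv '' B, Inverts inv u (a * b) := by
  have hB₁ : ∀ a ∈ B, Inverts inv u a := fun a ha => by
    simpa only [MoufangLoop.mul_one] using hB a ha 1 h1
  rintro _ (ha | ⟨a, ha, rfl⟩) _ (hb | ⟨b, hb, rfl⟩)
  · exact hB _ ha _ hb
  · exact (hB₁ _ ha).mul_inv hT hu (hBT ha) (hBT hb) (hB₁ b hb) (hB _ ha b hb)
  · exact (hB₁ a ha).inv_mul hT hu (hBT ha) (hBT hb) (hB₁ _ hb) (hB a ha _ hb)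
  · simpa only [hT.inv_mul_rev (hBT hb) (hBT ha)] using
      (hB b hb a ha).to_inv hT hu (hT.mul_mem b (hBT hb) a (hBT ha))

theorem inverts_mul_foldr (hT : IsSubgroupOfLoop T inv) (hu : u * u = 1)
    {A : Set L} (hAT : A ⊆ T) (h1 : 1 ∈ A) (hA_inv : ∀ a ∈ A, inv a ∈ A)
    (hA : ∀ a ∈ A, ∀ b ∈ A, Inverts inv u (a * b)) {l : List L} (hl : ∀ x ∈ l, x ∈ A) :
    ∀ g ∈ A, Inverts inv u (g * l.foldr (· * ·) 1) := by
  have hA₁ : ∀ a ∈ A, Inverts inv u a := fun a ha => by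
    simpa only [MoufangLoop.mul_one] using hA a ha 1 h1
  induction l with
  | nil => exact fun g hg => hA g hg 1 h1
  | cons m l ih =>
    intro g hg
    have hm : m ∈ A := hl m List.mem_cons_self
    have ih := ih fun x hx => hl x (List.mem_cons_of_mem m hx)
    have hv : l.foldr (· * ·) 1 ∈ T :=
      hT.foldr_mem fun x hx => hAT (hl x (List.mem_cons_of_mem m hx))
    have qv : Inverts inv u (l.foldr (· * ·) 1) := by
      simpa only [MoufangLoop.one_mul] using ih 1 h1
    exact Inverts.mul_mul hT hu (hAT hg) (hAT hm) hv (hA₁ g hg) (hA₁ m hm) qv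
      (hA g hg m hm) (ih m hm) (ih (inv g) (hA_inv g hg))

theorem inverts_foldr_of_mem_union_image (hT : IsSubgroupOfLoop T inv) (hu : u * u = 1)
    {B : Set L} (hBT : B ⊆ T) (h1 : 1 ∈ B) (hB : ∀ a ∈ B, ∀ b ∈ B, Inverts inv u (a * b))
    {l : List L} (hl : ∀ x ∈ l, x ∈ B ∪ inv '' B) : Inverts inv u (l.foldr (· * ·) 1) := by
  have hAT : B ∪ inv '' B ⊆ T :=
    Set.union_subset hBT (Set.image_subset_iff.2 fun a ha => hT.inv_mem a (hBT ha))
  have hA_inv : ∀ a ∈ B ∪ inv '' B, inv a ∈ B ∪ inv '' B := by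
    rintro a (ha | ⟨b, hb, rfl⟩)
    · exact Or.inr ⟨a, ha, rfl⟩
    · exact Or.inl (by rwa [hT.inv_inv (hBT hb)])
  simpa only [MoufangLoop.one_mul] using inverts_mul_foldr hT hu hAT (Or.inl h1) hA_inv
    (inverts_mul_of_mem_union_image hT hu hBT h1 hB) hl 1 (Or.inl h1)

end Words

end

/-- Lemma 2.5: if `L` is a Moufang loop, `T ≤ L` a subgroup generated by `S`, and
`u ∈ L` satisfies `((g₁g₂)u)² = 1` for all `g₁, g₂ ∈ S ∪ {e}`, then `uwu = w⁻¹`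
for every `w ∈ T`. -/
theorem conjugation_by_u {L : Type*} [MoufangLoop L]
    (T : Set L) (inv : L → L) (S : Set L) (u : L)
    (hT : IsSubgroupOfLoop T inv) (hgen : GeneratedBy T inv S)
    (hu : ∀ g₁ ∈ insert (1 : L) S, ∀ g₂ ∈ insert (1 : L) S,
      ((g₁ * g₂) * u) * ((g₁ * g₂) * u) = 1) :
    ∀ w ∈ T, (u * w) * u = inv w := by
  have h1 : (1 : L) ∈ insert 1 S := Set.mem_insert 1 S
  have hu1 : u * u = 1 := by simpa only [MoufangLoop.one_mul] using hu 1 h1 1 h1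
  have hST : insert 1 S ⊆ T := Set.insert_subset hT.one_mem hgen.1
  have hpair : ∀ a ∈ insert 1 S, ∀ b ∈ insert 1 S, Inverts inv u (a * b) := fun a ha b hb =>
    .of_mul_self hT hu1 (hT.mul_mem a (hST ha) b (hST hb)) (hu a ha b hb)
  intro w hw
  obtain ⟨l, hl, rfl⟩ := hgen.2 w hw
  refine inverts_foldr_of_mem_union_image hT hu1 hST h1 hpair fun x hx => ?_
  rcases hl x hx with hs | ⟨s, hs, rfl⟩
  · exact Or.inl (Set.mem_insert_of_mem 1 hs)
  · exact Or.inr ⟨s, Set.mem_insert_of_mem 1 hs, rfl⟩
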